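/- arXiv:2110.11805 — 2 statements merged into one kernel-verified Lean document; each statement's English description precedes it below -/
import Mathlib

section
/- Define l(t) = ‖a_t‖²/N, L₀(z) = a₀ᵀR(z)a₀/N, U₀(z) = YᵀZR(z)a₀/N^{3/2}, and V(z) = YᵀZR(z)ZᵀY/N². Then for all t ≥ 0, l(t) = 𝓡_z{ e^{−2t(z+δ)} L₀(z) + 2 e^{−t(z+δ)} ((1 − e^{−t(z+δ)})/(z + δ)) U₀(z) + ((1 − e^{−t(z+δ)})/(z + δ))² V(z) }. -/
open Matrix

private lemma scalarODE (μ w : ℝ) (hμ : μ ≠ 0) (f : ℝ → ℝ)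
    (hf : ∀ s, HasDerivAt f (-μ * f s + w) s) (t : ℝ) :
    f t = Real.exp (-(μ * t)) * f 0 + w * (1 - Real.exp (-(μ * t))) / μ := by
  have hdiff : ∀ x, HasDerivAt (fun s => Real.exp (μ * s) * f s - w / μ * Real.exp (μ * s)) 0 x := by
    intro x
    have h1 : HasDerivAt (fun s : ℝ => μ * s) μ x := by
      simpa using (hasDerivAt_id x).const_mul μ
    have he : HasDerivAt (fun s : ℝ => Real.exp (μ * s)) (Real.exp (μ * x) * μ) x :=
      (Real.hasDerivAt_exp (μ * x)).comp x h1
    have h2 := (he.mul (hf x)).sub (he.const_mul (w / μ))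
    refine h2.congr_deriv ?_
    field_simp
    ring
  have hconst := is_const_of_deriv_eq_zero
    (fun x => (hdiff x).differentiableAt) (fun x => (hdiff x).deriv) t 0
  have hE : (0:ℝ) < Real.exp (μ * t) := Real.exp_pos _
  rw [mul_zero, Real.exp_zero] at hconst
  rw [Real.exp_neg]
  field_simp at hconst ⊢
  linear_combination hconst

private lemma circleIntegral_finset_sum' {ι : Type*} (s : Finset ι) (c : ℂ) (R : ℝ)
    (f : ι → ℂ → ℂ) (hf : ∀ i ∈ s, CircleIntegrable (f i) c R) :
    (∮ z in C(c, R), ∑ i ∈ s, f i z) = ∑ i ∈ s, ∮ z in C(c, R), f i z := by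
  simp only [circleIntegral, Finset.smul_sum]
  exact intervalIntegral.integral_finset_sum fun i hi => (circleIntegrable_iff R).mp (hf i hi)

/-- Cauchy integral representation of `l(t) = ‖a_t‖²/N`:
`l(t) = 𝓡_z{ e^{-2t(z+δ)} L₀(z) + 2 e^{-t(z+δ)}((1-e^{-t(z+δ)})/(z+δ)) U₀(z)
  + ((1-e^{-t(z+δ)})/(z+δ))² V(z) }` for all `t ≥ 0`. -/
theorem stmt10 (n N d : ℕ) (hn : 0 < n) (hN : 0 < N) (hd : 0 < d)
    (Z : Matrix (Fin n) (Fin N) ℝ) (Θ : Matrix (Fin N) (Fin d) ℝ)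
    (β : Fin d → ℝ) (Y : Fin n → ℝ) (a₀ : Fin N → ℝ) (δ : ℝ) (hδ : 0 < δ)
    (a : ℝ → Fin N → ℝ) (ha0 : a 0 = a₀)
    (hODE : ∀ t : ℝ, HasDerivAt a
      (-((((N : ℝ)⁻¹ • (Zᵀ * Z)) + δ • (1 : Matrix (Fin N) (Fin N) ℝ)).mulVec (a t))
        + (Real.sqrt N)⁻¹ • Zᵀ.mulVec Y) t)
    (c : ℂ) (R : ℝ) (hR : 0 < R)
    (hspec : spectrum ℂ (((N : ℝ)⁻¹ • (Zᵀ * Z)).map Complex.ofReal) ⊆ Metric.ball c R)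
    (hδΓ : ((-δ : ℝ) : ℂ) ∉ Metric.closedBall c R)
    (Res : ℂ → Matrix (Fin N) (Fin N) ℂ)
    (hRes : ∀ z : ℂ, Res z = (((N : ℝ)⁻¹ • (Zᵀ * Z)).map Complex.ofReal
      - z • (1 : Matrix (Fin N) (Fin N) ℂ))⁻¹)
    (l : ℝ → ℝ) (hl : ∀ t : ℝ, l t = (a t ⬝ᵥ a t) / (N : ℝ))
    (L₀ : ℂ → ℂ)
    (hL₀ : ∀ z : ℂ, L₀ z = ((fun i => (a₀ i : ℂ)) ⬝ᵥ
      (Res z).mulVec (fun i => (a₀ i : ℂ))) / (N : ℂ))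
    (U₀ : ℂ → ℂ)
    (hU₀ : ∀ z : ℂ, U₀ z = ((fun i => (Y i : ℂ)) ⬝ᵥ
      ((Z.map Complex.ofReal) * Res z).mulVec (fun i => (a₀ i : ℂ)))
        / ((N : ℂ) * (Real.sqrt N : ℂ)))
    (V : ℂ → ℂ)
    (hV : ∀ z : ℂ, V z = ((fun i => (Y i : ℂ)) ⬝ᵥ
      ((Z.map Complex.ofReal) * Res z * (Zᵀ.map Complex.ofReal)).mulVec
        (fun i => (Y i : ℂ))) / ((N : ℂ) ^ 2)) :
    ∀ t : ℝ, 0 ≤ t →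
      ((l t : ℝ) : ℂ) =
        -(1 / (2 * Real.pi * Complex.I)) *
          (∮ z in C(c, R),
            (Complex.exp (-(2 * t : ℂ) * (z + (δ : ℂ))) * L₀ z
              + 2 * Complex.exp (-(t : ℂ) * (z + (δ : ℂ))) *
                ((1 - Complex.exp (-(t : ℂ) * (z + (δ : ℂ)))) / (z + (δ : ℂ))) * U₀ z
              + ((1 - Complex.exp (-(t : ℂ) * (z + (δ : ℂ)))) / (z + (δ : ℂ))) ^ 2 * V z)) := by
  classical
  intro t ht
  set A : Matrix (Fin N) (Fin N) ℝ := (N : ℝ)⁻¹ • (Zᵀ * Z) with hAdef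
  have hZZ : (Zᵀ * Z).IsHermitian := by
    have h := isHermitian_conjTranspose_mul_self Z
    rwa [conjTranspose_eq_transpose_of_trivial] at h
  have hA : A.IsHermitian := by
    show Aᴴ = A
    rw [hAdef, conjTranspose_smul, hZZ.eq]
    norm_num
  have hPSD : A.PosSemidef := by
    have h2 := posSemidef_conjTranspose_mul_self (Z : Matrix (Fin n) (Fin N) ℝ)
    rw [conjTranspose_eq_transpose_of_trivial] at h2
    rw [hAdef]
    exact h2.smul (by positivity)
  set lam : Fin N → ℝ := hA.eigenvalues with hlam
  set U : Matrix (Fin N) (Fin N) ℝ := (hA.eigenvectorUnitary : Matrix (Fin N) (Fin N) ℝ) with hUdef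
  have hU1 : U * star U = 1 := mem_unitaryGroup_iff.mp hA.eigenvectorUnitary.2
  have hU2 : star U * U = 1 := mem_unitaryGroup_iff'.mp hA.eigenvectorUnitary.2
  have hspecR : A = U * diagonal lam * star U := by
    have h := hA.spectral_theorem
    simpa [RCLike.ofReal_real_eq_id] using h
  have hDU : star U * A = diagonal lam * star U := by
    rw [hspecR, ← Matrix.mul_assoc, ← Matrix.mul_assoc, hU2, Matrix.one_mul]
  set bb : Fin N → ℝ := (Real.sqrt N)⁻¹ • Zᵀ.mulVec Y with hbb
  set w : Fin N → ℝ := (star U).mulVec bb with hw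
  set al : Fin N → ℝ := (star U).mulVec a₀ with hal
  have hlamnn : ∀ i, 0 ≤ lam i := fun i => hPSD.eigenvalues_nonneg i
  have hmupos : ∀ i, 0 < lam i + δ := fun i => add_pos_of_nonneg_of_pos (hlamnn i) hδ
  set cf : ℝ → Fin N → ℝ := fun s => (star U).mulVec (a s) with hcf
  have hcf0 : ∀ i, cf 0 i = al i := by intro i; rw [hcf]; simp [ha0, hal]
  have hcoordA : ∀ (x : Fin N → ℝ) (i : Fin N),
      ((star U).mulVec (A.mulVec x)) i = lam i * ((star U).mulVec x) i := by
    intro x i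
    rw [Matrix.mulVec_mulVec, hDU, ← Matrix.mulVec_mulVec, Matrix.mulVec_diagonal]
  have hcfODE : ∀ i s, HasDerivAt (fun s => cf s i) (-(lam i + δ) * cf s i + w i) s := by
    intro i s
    have hD := ((LinearMap.toContinuousLinearMap
        ((LinearMap.proj i).comp (Matrix.mulVecLin (star U)))).hasFDerivAt
        (x := a s)).comp_hasDerivAt s (hODE s)
    have hval : (LinearMap.toContinuousLinearMap
        ((LinearMap.proj i).comp (Matrix.mulVecLin (star U))))
        (-((A + δ • 1).mulVec (a s)) + bb) = -(lam i + δ) * cf s i + w i := by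
      show ((star U).mulVec (-((A + δ • 1).mulVec (a s)) + bb)) i
        = -(lam i + δ) * cf s i + w i
      have hid : ((δ • (1 : Matrix (Fin N) (Fin N) ℝ)).mulVec (a s)) = δ • a s := by
        rw [Matrix.smul_mulVec, Matrix.one_mulVec]
      rw [Matrix.mulVec_add, ← hw, Matrix.mulVec_neg, Matrix.add_mulVec, hid,
        Matrix.mulVec_add]
      simp only [Matrix.mulVec_smul, Pi.add_apply, Pi.neg_apply, Pi.smul_apply, smul_eq_mul, hcoordA]
      rw [hcf]
      ring
    rw [hval] at hD
    exact hD
  have hsol : ∀ s i, cf s i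
      = Real.exp (-((lam i + δ) * s)) * al i
        + w i * (1 - Real.exp (-((lam i + δ) * s))) / (lam i + δ) := by
    intro s i
    have h := scalarODE (lam i + δ) (w i) (hmupos i).ne' (fun s => cf s i) (hcfODE i) s
    rwa [hcf0 i] at h
  -- complex side
  set Uc : Matrix (Fin N) (Fin N) ℂ := U.map Complex.ofReal with hUc
  have hstarc : star Uc = (star U).map Complex.ofReal := by
    ext i j
    simp [hUc, Matrix.star_apply, Matrix.map_apply, Complex.conj_ofReal]
  have hmapmul : ∀ (P Q : Matrix (Fin N) (Fin N) ℝ),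
      (P * Q).map Complex.ofReal = P.map Complex.ofReal * Q.map Complex.ofReal := by
    intro P Q
    exact Matrix.map_mul (f := Complex.ofRealHom)
  have hmapone : (1 : Matrix (Fin N) (Fin N) ℝ).map Complex.ofReal
      = (1 : Matrix (Fin N) (Fin N) ℂ) := by
    exact Matrix.map_one _ Complex.ofReal_zero Complex.ofReal_one
  have hUc1 : Uc * star Uc = 1 := by
    rw [hstarc, hUc, ← hmapmul, hU1, hmapone]
  have hUc2 : star Uc * Uc = 1 := by
    rw [hstarc, hUc, ← hmapmul, hU2, hmapone]
  have hBc : A.map Complex.ofReal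
      = Uc * diagonal (fun i => (lam i : ℂ)) * star Uc := by
    rw [hspecR, hmapmul, hmapmul, hstarc, hUc]
    congr 1
    congr 1
    ext i j
    by_cases h : i = j <;> simp [Matrix.map_apply, Matrix.diagonal, h]
  have hsand : ∀ (d₁ d₂ : Fin N → ℂ),
      (Uc * diagonal d₁ * star Uc) * (Uc * diagonal d₂ * star Uc)
        = Uc * diagonal (fun i => d₁ i * d₂ i) * star Uc := by
    intro d₁ d₂
    have h : Uc * diagonal d₁ * star Uc * (Uc * diagonal d₂ * star Uc)
        = Uc * (diagonal d₁ * ((star Uc * Uc) * (diagonal d₂ * star Uc))) := by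
      simp only [Matrix.mul_assoc]
    rw [h, hUc2, Matrix.one_mul, ← Matrix.mul_assoc (diagonal d₁),
      diagonal_mul_diagonal, ← Matrix.mul_assoc]
  have hsmul1 : ∀ z : ℂ, z • (1 : Matrix (Fin N) (Fin N) ℂ)
      = Uc * diagonal (fun _ => z) * star Uc := by
    intro z
    rw [← smul_one_eq_diagonal, Matrix.mul_smul, Matrix.mul_one, Matrix.smul_mul, hUc1]
  have hsub : ∀ z : ℂ, A.map Complex.ofReal - z • 1
      = Uc * diagonal (fun i => (lam i : ℂ) - z) * star Uc := by
    intro z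
    rw [hBc, hsmul1 z, ← Matrix.sub_mul, ← Matrix.mul_sub, diagonal_sub]
  have hResFormula : ∀ z : ℂ, (∀ i, (lam i : ℂ) ≠ z) →
      Res z = Uc * diagonal (fun i => ((lam i : ℂ) - z)⁻¹) * star Uc := by
    intro z hz
    rw [hRes]
    apply inv_eq_right_inv
    rw [hsub z, hsand]
    have : (fun i => ((lam i : ℂ) - z) * ((lam i : ℂ) - z)⁻¹) = fun _ => (1:ℂ) := by
      funext i
      exact mul_inv_cancel₀ (sub_ne_zero.mpr (hz i))
    rw [this, diagonal_one, Matrix.mul_one, hUc1]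
  have hball : ∀ i, ((lam i : ℂ)) ∈ Metric.ball c R := by
    intro i
    apply hspec
    rw [spectrum.mem_iff]
    have hd0 : (algebraMap ℂ (Matrix (Fin N) (Fin N) ℂ)) (lam i : ℂ) - A.map Complex.ofReal
        = Uc * diagonal (fun j => (lam i : ℂ) - (lam j : ℂ)) * star Uc := by
      rw [Algebra.algebraMap_eq_smul_one, hsmul1, hBc, ← Matrix.sub_mul,
        ← Matrix.mul_sub, diagonal_sub]
    rw [Matrix.isUnit_iff_isUnit_det, hd0]
    rw [Matrix.det_mul, Matrix.det_mul, det_diagonal]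
    have : ∏ j, ((lam i : ℂ) - (lam j : ℂ)) = 0 :=
      Finset.prod_eq_zero (Finset.mem_univ i) (by simp)
    rw [this]
    simp
  -- transpose/cast helpers
  have hstarU : star U = Uᵀ := by
    rw [Matrix.star_eq_conjTranspose, conjTranspose_eq_transpose_of_trivial]
  have hcast : ∀ (p : Fin N → ℝ),
      (star Uc).mulVec (fun i => (p i : ℂ)) = fun i => (((star U).mulVec p) i : ℂ) := by
    intro p
    funext i
    rw [hstarc]
    exact (RingHom.map_mulVec Complex.ofRealHom (star U) p i).symm
  have hUcT : Ucᵀ = star Uc := by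
    rw [hstarc, hstarU, hUc]
    ext i j
    simp [Matrix.map_apply]
  have hquad : ∀ (p q : Fin N → ℝ) (dg : Fin N → ℂ),
      ((fun i => (p i : ℂ)) ⬝ᵥ (Uc * diagonal dg * star Uc).mulVec (fun i => (q i : ℂ)))
        = ∑ i, dg i * (((star U).mulVec p) i : ℂ) * (((star U).mulVec q) i : ℂ) := by
    intro p q dg
    rw [← Matrix.mulVec_mulVec, ← Matrix.mulVec_mulVec, Matrix.dotProduct_mulVec,
      ← Matrix.transpose_transpose Uc, Matrix.vecMul_transpose, Matrix.transpose_transpose,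
      hUcT, hcast p, hcast q]
    simp only [dotProduct, Matrix.mulVec_diagonal]
    exact Finset.sum_congr rfl fun i _ => by ring
  -- numeric helpers
  have hNR0 : (0:ℝ) < (N:ℝ) := by exact_mod_cast hN
  have hsqrtN : Real.sqrt N ≠ 0 := ne_of_gt (Real.sqrt_pos.mpr hNR0)
  have hNCne : (N:ℂ) ≠ 0 := by
    simp only [ne_eq, Nat.cast_eq_zero]
    exact hN.ne'
  have hsqrtC : ((Real.sqrt N : ℝ) : ℂ) ≠ 0 := Complex.ofReal_ne_zero.mpr hsqrtN
  have hZY : Zᵀ.mulVec Y = Real.sqrt N • bb := by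
    rw [hbb, smul_smul, mul_inv_cancel₀ hsqrtN, one_smul]
  -- the holomorphic functions
  obtain ⟨ec, hec⟩ : ∃ ec : ℂ → ℂ, ec = fun z => Complex.exp (-(t:ℂ) * (z + (δ:ℂ))) := ⟨_, rfl⟩
  obtain ⟨φf, hφ⟩ : ∃ φf : ℂ → ℂ, φf = fun z => (1 - ec z) / (z + (δ:ℂ)) := ⟨_, rfl⟩
  obtain ⟨g, hg⟩ : ∃ g : Fin N → ℂ → ℂ,
    g = fun i z => (ec z * (al i : ℂ) + φf z * (w i : ℂ)) ^ 2 / (N:ℂ) := ⟨_, rfl⟩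
  obtain ⟨F, hF⟩ : ∃ F : Fin N → ℂ → ℂ,
    F = fun i z => (z - (lam i : ℂ))⁻¹ • (-(g i z)) := ⟨_, rfl⟩
  have hzδ : ∀ z ∈ Metric.closedBall c R, z + (δ:ℂ) ≠ 0 := by
    intro z hz h
    apply hδΓ
    have hzz : z = -(δ:ℂ) := eq_neg_of_add_eq_zero_left h
    rw [Complex.ofReal_neg, ← hzz]
    exact hz
  have hz_ne : ∀ z ∈ Metric.sphere c R, ∀ i, (lam i : ℂ) ≠ z := by
    intro z hz i h
    have hb := hball i
    rw [h, Metric.mem_ball, Metric.mem_sphere.mp hz] at hb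
    exact lt_irrefl _ hb
  have hgd : ∀ i, DiffContOnCl ℂ (g i) (Metric.ball c R) := by
    intro i
    have hd : ∀ z ∈ Metric.closedBall c R, DifferentiableAt ℂ (g i) z := by
      intro z hz
      have h0 := hzδ z hz
      have hde : DifferentiableAt ℂ ec z := by
        simp only [hec]
        exact ((differentiableAt_id.add (differentiableAt_const _)).const_mul _).cexp
      have hdφ : DifferentiableAt ℂ φf z := by
        simp only [hφ]
        exact ((differentiableAt_const _).sub hde).div
          (differentiableAt_id.add (differentiableAt_const _)) h0
      simp only [hg]
      exact (((hde.mul_const _).add (hdφ.mul_const _)).pow 2).div_const _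
    refine ⟨fun z hz => (hd z (Metric.ball_subset_closedBall hz)).differentiableWithinAt, ?_⟩
    intro z hz
    rw [closure_ball c hR.ne'] at hz
    exact (hd z hz).continuousAt.continuousWithinAt
  have hcauchy : ∀ i, (∮ z in C(c, R), (z - (lam i : ℂ))⁻¹ • (-(g i z)))
      = (2 * Real.pi * Complex.I : ℂ) • (-(g i ((lam i : ℂ)))) :=
    fun i => ((hgd i).neg).circleIntegral_sub_inv_smul (hball i)
  have hgcont : ∀ i, ContinuousOn (g i) (Metric.sphere c R) := by
    intro i
    refine ((hgd i).continuousOn).mono ?_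
    rw [closure_ball c hR.ne']
    exact Metric.sphere_subset_closedBall
  have hFcont : ∀ i, ContinuousOn (F i) (Metric.sphere c R) := by
    intro i
    simp only [hF]
    apply ContinuousOn.fun_smul
    · apply ContinuousOn.inv₀ ((continuous_id.sub continuous_const).continuousOn)
      intro z hz
      exact sub_ne_zero.mpr (hz_ne z hz i).symm
    · exact (hgcont i).neg
  have hInt : ∀ i ∈ (Finset.univ : Finset (Fin N)), CircleIntegrable (F i) c R :=
    fun i _ => (hFcont i).circleIntegrable hR.le
  -- pointwise identity on the sphere
  have hEq : Set.EqOn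
      (fun z => (Complex.exp (-(2 * t : ℂ) * (z + (δ : ℂ))) * L₀ z
              + 2 * Complex.exp (-(t : ℂ) * (z + (δ : ℂ))) *
                ((1 - Complex.exp (-(t : ℂ) * (z + (δ : ℂ)))) / (z + (δ : ℂ))) * U₀ z
              + ((1 - Complex.exp (-(t : ℂ) * (z + (δ : ℂ)))) / (z + (δ : ℂ))) ^ 2 * V z))
      (fun z => ∑ i, F i z) (Metric.sphere c R) := by
    intro z hz
    have h1 : ∀ i, (lam i : ℂ) ≠ z := hz_ne z hz
    have h2 : z + (δ:ℂ) ≠ 0 := hzδ z (Metric.sphere_subset_closedBall hz)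
    have hYvec : (fun i => (Y i : ℂ)) ᵥ* (Z.map Complex.ofReal)
        = (Real.sqrt N : ℂ) • (fun i => (bb i : ℂ)) := by
      funext i
      rw [← Matrix.mulVec_transpose]
      have hT : (Z.map Complex.ofReal)ᵀ = Zᵀ.map Complex.ofReal :=
        (Matrix.transpose_map).symm
      rw [hT]
      calc ((Zᵀ.map Complex.ofReal).mulVec fun i => (Y i : ℂ)) i
          = (((Zᵀ.mulVec Y) i : ℝ) : ℂ) :=
            (RingHom.map_mulVec Complex.ofRealHom Zᵀ Y i).symm
        _ = ((Real.sqrt N : ℂ) • fun i => ((bb i : ℝ) : ℂ)) i := by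
            rw [hZY]
            simp [Pi.smul_apply, smul_eq_mul]
    have hb2 : (Zᵀ.map Complex.ofReal).mulVec (fun i => (Y i : ℂ))
        = (Real.sqrt N : ℂ) • (fun i => (bb i : ℂ)) := by
      funext i
      calc ((Zᵀ.map Complex.ofReal).mulVec fun i => (Y i : ℂ)) i
          = (((Zᵀ.mulVec Y) i : ℝ) : ℂ) :=
            (RingHom.map_mulVec Complex.ofRealHom Zᵀ Y i).symm
        _ = ((Real.sqrt N : ℂ) • fun i => ((bb i : ℝ) : ℂ)) i := by
            rw [hZY]
            simp [Pi.smul_apply, smul_eq_mul]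
    have hL0z : L₀ z = ∑ i, ((lam i:ℂ) - z)⁻¹ * (al i : ℂ) * (al i : ℂ) / (N:ℂ) := by
      rw [hL₀ z, hResFormula z h1, hquad a₀ a₀, ← hal, Finset.sum_div]
    have hU0z : U₀ z = ∑ i, ((lam i:ℂ) - z)⁻¹ * (w i : ℂ) * (al i : ℂ) / (N:ℂ) := by
      rw [hU₀ z, hResFormula z h1, ← Matrix.mulVec_mulVec, Matrix.dotProduct_mulVec, hYvec,
        smul_dotProduct, hquad bb a₀, ← hal, ← hw, smul_eq_mul, Finset.mul_sum,
        Finset.sum_div]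
      apply Finset.sum_congr rfl
      intro i _
      have h3 : ((lam i:ℂ) - z) ≠ 0 := sub_ne_zero.mpr (h1 i)
      field_simp
    have hVz : V z = ∑ i, ((lam i:ℂ) - z)⁻¹ * (w i : ℂ) * (w i : ℂ) / (N:ℂ) := by
      rw [hV z, hResFormula z h1, ← Matrix.mulVec_mulVec, ← Matrix.mulVec_mulVec,
        Matrix.dotProduct_mulVec, hYvec, hb2, Matrix.mulVec_smul, smul_dotProduct,
        dotProduct_smul, hquad bb bb, ← hw, smul_eq_mul, smul_eq_mul, ← mul_assoc]
      have hss : ((Real.sqrt N : ℝ) : ℂ) * ((Real.sqrt N : ℝ) : ℂ) = (N:ℂ) := by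
        rw [← Complex.ofReal_mul, Real.mul_self_sqrt (le_of_lt hNR0)]
        push_cast
        rfl
      rw [hss, Finset.mul_sum, Finset.sum_div]
      apply Finset.sum_congr rfl
      intro i _
      have h3 : ((lam i:ℂ) - z) ≠ 0 := sub_ne_zero.mpr (h1 i)
      field_simp
    show (Complex.exp (-(2 * t : ℂ) * (z + (δ : ℂ))) * L₀ z
              + 2 * Complex.exp (-(t : ℂ) * (z + (δ : ℂ))) *
                ((1 - Complex.exp (-(t : ℂ) * (z + (δ : ℂ)))) / (z + (δ : ℂ))) * U₀ z
              + ((1 - Complex.exp (-(t : ℂ) * (z + (δ : ℂ)))) / (z + (δ : ℂ))) ^ 2 * V z)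
        = ∑ i, F i z
    have hφz : (1 - Complex.exp (-(t:ℂ) * (z + (δ:ℂ)))) / (z + (δ:ℂ)) = φf z := by
      rw [hφ, hec]
    have hecz : Complex.exp (-(t:ℂ) * (z + (δ:ℂ))) = ec z := by rw [hec]
    have hEE : Complex.exp (-(2 * t : ℂ) * (z + (δ:ℂ))) = ec z * ec z := by
      simp only [hec]
      rw [← Complex.exp_add]
      congr 1
      ring
    rw [hL0z, hU0z, hVz, hφz, hecz, hEE]
    simp only [hF, hg]
    rw [Finset.mul_sum, Finset.mul_sum, Finset.mul_sum, ← Finset.sum_add_distrib,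
      ← Finset.sum_add_distrib]
    apply Finset.sum_congr rfl
    intro i _
    have hinv : (z - (lam i:ℂ)) = -((lam i:ℂ) - z) := by ring
    rw [hinv, inv_neg, smul_eq_mul]
    ring
  -- final assembly
  have hπ : ((2:ℂ) * (Real.pi:ℂ) * Complex.I) ≠ 0 :=
    mul_ne_zero (mul_ne_zero two_ne_zero (Complex.ofReal_ne_zero.mpr Real.pi_ne_zero))
      Complex.I_ne_zero
  have hltc : ((l t : ℝ) : ℂ) = ∑ i, g i ((lam i : ℂ)) := by
    have hdot : cf t ⬝ᵥ cf t = a t ⬝ᵥ a t := by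
      simp only [hcf]
      rw [Matrix.dotProduct_mulVec, hstarU, Matrix.vecMul_transpose,
        Matrix.mulVec_mulVec, ← hstarU, hU1, Matrix.one_mulVec]
    have hsq : cf t ⬝ᵥ cf t = ∑ i, (cf t i)^2 := by
      simp [dotProduct, sq]
    rw [hl t, ← hdot, hsq, Finset.sum_div]
    push_cast
    apply Finset.sum_congr rfl
    intro i _
    have he1 : ec ((lam i : ℂ)) = ((Real.exp (-((lam i + δ) * t)) : ℝ) : ℂ) := by
      simp only [hec]
      rw [Complex.ofReal_exp]
      congr 1
      push_cast
      ring
    have he2 : φf ((lam i : ℂ))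
        = (((1 - Real.exp (-((lam i + δ) * t))) / (lam i + δ) : ℝ) : ℂ) := by
      simp only [hφ, he1]
      push_cast
      ring
    simp only [hg]
    rw [he1, he2, hsol t i]
    push_cast
    ring
  rw [hltc, circleIntegral.integral_congr hR.le hEq,
    circleIntegral_finset_sum' Finset.univ c R F hInt]
  have hsum : ∑ i, (∮ z in C(c,R), F i z)
      = ∑ i : Fin N, (2 * Real.pi * Complex.I : ℂ) • (-(g i ((lam i:ℂ)))) :=
    Finset.sum_congr rfl fun i _ => by
      simp only [hF]
      exact hcauchy i
  rw [hsum]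
  simp only [smul_eq_mul, mul_neg, Finset.sum_neg_distrib, ← Finset.mul_sum]
  field_simp
end

section
/- Define h̃(t) = ‖Z a_t‖²/N², l(t) = ‖a_t‖²/N, L₀(z) = a₀ᵀR(z)a₀/N, U₀(z) = YᵀZR(z)a₀/N^{3/2}, and V(z) = YᵀZR(z)ZᵀY/N². Then for all t ≥ 0, h̃(t) + δ l(t) = 𝓡_z{ (z+δ) e^{−2t(z+δ)} L₀(z) + 2 e^{−t(z+δ)}(1 − e^{−t(z+δ)}) U₀(z) + ((1 − e^{−t(z+δ)})²/(z+δ)) V(z) }. -/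
open Matrix Metric

section Stmt17Aux

variable {N : ℕ}

lemma stmt17_ode_solve (μ b α : ℝ) (hμ : μ ≠ 0) (c : ℝ → ℝ) (hc0 : c 0 = α)
    (hode : ∀ t, HasDerivAt c (-(μ * c t) + b) t) :
    ∀ t, c t = Real.exp (-(μ * t)) * (α - b / μ) + b / μ := by
  intro t
  set g : ℝ → ℝ := fun s => Real.exp (μ * s) * (c s - b / μ) with hg
  have hderiv : ∀ s, HasDerivAt g 0 s := by
    intro s
    have h1 : HasDerivAt (fun s : ℝ => Real.exp (μ * s)) (μ * Real.exp (μ * s)) s := by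
      simpa [mul_comm] using ((hasDerivAt_id s).const_mul μ).exp
    have h2 : HasDerivAt (fun s => c s - b / μ) (-(μ * c s) + b) s := by
      simpa using (hode s).sub_const (b / μ)
    have h3 := h1.mul h2
    have hb : μ * (b / μ) = b := mul_div_cancel₀ b hμ
    exact h3.congr_deriv (by linear_combination (-Real.exp (μ * s)) * hb)
  have hconst : ∀ s, g s = g 0 := by
    intro s
    have hdiff : Differentiable ℝ g := fun s => (hderiv s).differentiableAt
    have : ∀ x, deriv g x = 0 := fun x => (hderiv x).deriv
    exact is_const_of_deriv_eq_zero hdiff this s 0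
  have h0 : g 0 = α - b / μ := by simp [hg, hc0]
  have ht := hconst t
  rw [h0, hg] at ht
  simp only at ht
  have hexp : Real.exp (μ * t) ≠ 0 := Real.exp_ne_zero _
  have key : c t - b / μ = Real.exp (-(μ * t)) * (α - b / μ) := by
    rw [Real.exp_neg, eq_comm, inv_mul_eq_iff_eq_mul₀ hexp,
      mul_comm (Real.exp (μ*t)), ← ht, mul_comm]
  linarith [key]

lemma stmt17_circleIntegral_finset_sum {ι : Type*} (s : Finset ι) (f : ι → ℂ → ℂ)
    (c : ℂ) (R : ℝ) (h : ∀ i ∈ s, CircleIntegrable (f i) c R) :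
    (∮ z in C(c, R), ∑ i ∈ s, f i z) = ∑ i ∈ s, ∮ z in C(c, R), f i z := by
  simp only [circleIntegral, Finset.smul_sum]
  exact intervalIntegral.integral_finset_sum fun i hi => (h i hi).out

lemma stmt17_circleIntegral_neg (f : ℂ → ℂ) (c : ℂ) (R : ℝ) :
    (∮ z in C(c, R), -f z) = -∮ z in C(c, R), f z := by
  simp only [circleIntegral, smul_neg, intervalIntegral.integral_neg]

lemma stmt17_cauchy_formula (f : ℂ → ℂ) (c w : ℂ) (R : ℝ) (hR : 0 ≤ R)
    (hf : DiffContOnCl ℂ f (ball c R)) (hw : w ∈ ball c R) :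
    (∮ z in C(c, R), (w - z)⁻¹ * f z) = -(2 * Real.pi * Complex.I) * f w := by
  have h := hf.circleIntegral_sub_inv_smul hw
  have h2 : (∮ z in C(c, R), (w - z)⁻¹ * f z) = -∮ z in C(c, R), (z - w)⁻¹ • f z := by
    rw [← stmt17_circleIntegral_neg]
    refine circleIntegral.integral_congr hR fun z hz => ?_
    simp only [smul_eq_mul]
    rw [← neg_mul, ← inv_neg, neg_sub]
  rw [h2, h, smul_eq_mul]
  ring

lemma stmt17_map_mulVec_ofReal {m k : ℕ} (A : Matrix (Fin m) (Fin k) ℝ) (v : Fin k → ℝ) :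
    (A.map Complex.ofReal).mulVec (fun j => (v j : ℂ)) = fun j => ((A.mulVec v j : ℝ) : ℂ) := by
  funext j
  simp [mulVec, dotProduct, Matrix.map_apply]

lemma stmt17_eig_mem_spectrum (A : Matrix (Fin N) (Fin N) ℝ) (v : Fin N → ℝ) (lam : ℝ)
    (hv : A.mulVec v = lam • v) (hv0 : v ≠ 0) :
    (lam : ℂ) ∈ spectrum ℂ (A.map Complex.ofReal) := by
  rw [spectrum.mem_iff]
  intro hu
  set Ac := A.map Complex.ofReal
  set vc : Fin N → ℂ := fun j => (v j : ℂ) with hvc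
  have hvce : Ac.mulVec vc = (lam : ℂ) • vc := by
    rw [stmt17_map_mulVec_ofReal, hv]
    funext j
    simp [hvc]
  have halg : (algebraMap ℂ (Matrix (Fin N) (Fin N) ℂ)) (lam : ℂ) = (lam : ℂ) • 1 :=
    Algebra.algebraMap_eq_smul_one _
  rw [halg] at hu
  have hB := hu.val_inv_mul
  have hker : ((lam : ℂ) • (1 : Matrix (Fin N) (Fin N) ℂ) - Ac).mulVec vc = 0 := by
    rw [sub_mulVec, smul_mulVec, one_mulVec, hvce, sub_self]
  have : vc = 0 := by
    calc vc = (1 : Matrix (Fin N) (Fin N) ℂ).mulVec vc := (one_mulVec vc).symm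
    _ = (((hu.unit⁻¹ : _) : Matrix (Fin N) (Fin N) ℂ) * ((lam : ℂ) • 1 - Ac)).mulVec vc := by
        rw [hB]
    _ = ((hu.unit⁻¹ : _) : Matrix (Fin N) (Fin N) ℂ).mulVec (((lam : ℂ) • 1 - Ac).mulVec vc) := by
        rw [← mulVec_mulVec]
    _ = 0 := by rw [hker, mulVec_zero]
  apply hv0
  funext j
  have := congrFun this j
  simpa [hvc] using this

lemma stmt17_res_mulVec (A : Matrix (Fin N) (Fin N) ℝ) (v : Fin N → ℝ) (lam : ℝ) (z : ℂ)
    (hv : A.mulVec v = lam • v) (hv0 : v ≠ 0)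
    (hz : z ∉ spectrum ℂ (A.map Complex.ofReal)) :
    ((A.map Complex.ofReal) - z • 1)⁻¹.mulVec (fun j => (v j : ℂ))
      = ((lam : ℂ) - z)⁻¹ • (fun j => (v j : ℂ)) := by
  set Ac := A.map Complex.ofReal with hAc
  set vc : Fin N → ℂ := fun j => (v j : ℂ) with hvc
  have hvce : Ac.mulVec vc = (lam : ℂ) • vc := by
    rw [hAc, stmt17_map_mulVec_ofReal, hv]; funext j; simp [hvc]
  have hne : (lam : ℂ) ≠ z := by
    intro h
    exact hz (h ▸ stmt17_eig_mem_spectrum A v lam hv hv0)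
  have hu : IsUnit (Ac - z • 1) := by
    rw [spectrum.notMem_iff] at hz
    have : Ac - z • 1 = -((algebraMap ℂ (Matrix (Fin N) (Fin N) ℂ)) z - Ac) := by
      rw [Algebra.algebraMap_eq_smul_one, neg_sub]
    rw [this]
    exact hz.neg
  have hdet : IsUnit (Ac - z • 1).det := (isUnit_iff_isUnit_det _).mp hu
  have hinv : (Ac - z • 1)⁻¹ * (Ac - z • 1) = 1 := nonsing_inv_mul _ hdet
  have hact : (Ac - z • 1).mulVec vc = ((lam : ℂ) - z) • vc := by
    rw [sub_mulVec, hvce, smul_mulVec, one_mulVec, sub_smul]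
  have key : vc = ((lam : ℂ) - z) • (Ac - z • 1)⁻¹.mulVec vc := by
    calc vc = ((Ac - z • 1)⁻¹ * (Ac - z • 1)).mulVec vc := by rw [hinv, one_mulVec]
    _ = (Ac - z • 1)⁻¹.mulVec (((lam : ℂ) - z) • vc) := by rw [← mulVec_mulVec, hact]
    _ = ((lam : ℂ) - z) • (Ac - z • 1)⁻¹.mulVec vc := by rw [mulVec_smul]
  have h2 : ((lam : ℂ) - z)⁻¹ • vc = (Ac - z • 1)⁻¹.mulVec vc := by
    conv_lhs => rw [key]
    rw [smul_smul, inv_mul_cancel₀ (sub_ne_zero.mpr hne), one_smul]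
  exact h2.symm

lemma stmt17_sum_dotProduct {K : Type*} [CommRing K] {ι : Type*} (s : Finset ι)
    (f : ι → Fin N → K) (x : Fin N → K) :
    (∑ i ∈ s, f i) ⬝ᵥ x = ∑ i ∈ s, f i ⬝ᵥ x := by
  simp only [dotProduct, Finset.sum_apply, Finset.sum_mul]
  exact Finset.sum_comm

lemma stmt17_dotProduct_sum {K : Type*} [CommRing K] {ι : Type*} (s : Finset ι)
    (x : Fin N → K) (f : ι → Fin N → K) :
    x ⬝ᵥ (∑ i ∈ s, f i) = ∑ i ∈ s, x ⬝ᵥ f i := by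
  simp only [dotProduct, Finset.sum_apply, Finset.mul_sum]
  exact Finset.sum_comm

lemma stmt17_mulVec_sum {K : Type*} [CommRing K] {m : ℕ} {ι : Type*} (s : Finset ι)
    (A : Matrix (Fin m) (Fin N) K) (f : ι → Fin N → K) :
    A.mulVec (∑ i ∈ s, f i) = ∑ i ∈ s, A.mulVec (f i) := by
  funext j
  simp only [mulVec, dotProduct, Finset.sum_apply, Finset.mul_sum]
  exact Finset.sum_comm

lemma stmt17_dot_sums {K : Type*} [Field K] (w : Fin N → Fin N → K)
    (horth : ∀ i j, w i ⬝ᵥ w j = if i = j then 1 else 0) (cf df : Fin N → K) :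
    (∑ i, cf i • w i) ⬝ᵥ (∑ j, df j • w j) = ∑ i, cf i * df i := by
  rw [stmt17_sum_dotProduct]
  refine Finset.sum_congr rfl fun i _ => ?_
  rw [stmt17_dotProduct_sum]
  have : ∀ j, (cf i • w i) ⬝ᵥ (df j • w j) = cf i * df j * (if i = j then 1 else 0) := by
    intro j
    rw [smul_dotProduct, dotProduct_smul, horth i j, smul_eq_mul, smul_eq_mul]
    ring
  simp only [this]
  rw [Finset.sum_eq_single i]
  · simp
  · intro j _ hj; simp [Ne.symm hj]
  · intro h; simp at h

end Stmt17Aux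

set_option maxHeartbeats 2000000 in
/-- Cauchy integral representation of `h̃(t) + δ l(t)`:
`h̃(t) + δ l(t) = 𝓡_z{ (z+δ) e^{-2t(z+δ)} L₀(z) + 2 e^{-t(z+δ)}(1-e^{-t(z+δ)}) U₀(z)
  + ((1-e^{-t(z+δ)})²/(z+δ)) V(z) }` for all `t ≥ 0`. -/
theorem stmt17 (n N d : ℕ) (hn : 0 < n) (hN : 0 < N) (hd : 0 < d)
    (Z : Matrix (Fin n) (Fin N) ℝ) (Θ : Matrix (Fin N) (Fin d) ℝ)
    (β : Fin d → ℝ) (Y : Fin n → ℝ) (a₀ : Fin N → ℝ) (δ : ℝ) (hδ : 0 < δ)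
    (a : ℝ → Fin N → ℝ) (ha0 : a 0 = a₀)
    (hODE : ∀ t : ℝ, HasDerivAt a
      (-((((N : ℝ)⁻¹ • (Zᵀ * Z)) + δ • (1 : Matrix (Fin N) (Fin N) ℝ)).mulVec (a t))
        + (Real.sqrt N)⁻¹ • Zᵀ.mulVec Y) t)
    (c : ℂ) (R : ℝ) (hR : 0 < R)
    (hspec : spectrum ℂ (((N : ℝ)⁻¹ • (Zᵀ * Z)).map Complex.ofReal) ⊆ Metric.ball c R)
    (hδΓ : ((-δ : ℝ) : ℂ) ∉ Metric.closedBall c R)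
    (Res : ℂ → Matrix (Fin N) (Fin N) ℂ)
    (hRes : ∀ z : ℂ, Res z = (((N : ℝ)⁻¹ • (Zᵀ * Z)).map Complex.ofReal
      - z • (1 : Matrix (Fin N) (Fin N) ℂ))⁻¹)
    (htil : ℝ → ℝ)
    (hhtil : ∀ t : ℝ, htil t = (Z.mulVec (a t) ⬝ᵥ Z.mulVec (a t)) / ((N : ℝ) ^ 2))
    (l : ℝ → ℝ) (hl : ∀ t : ℝ, l t = (a t ⬝ᵥ a t) / (N : ℝ))
    (L₀ : ℂ → ℂ)
    (hL₀ : ∀ z : ℂ, L₀ z = ((fun i => (a₀ i : ℂ)) ⬝ᵥ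
      (Res z).mulVec (fun i => (a₀ i : ℂ))) / (N : ℂ))
    (U₀ : ℂ → ℂ)
    (hU₀ : ∀ z : ℂ, U₀ z = ((fun i => (Y i : ℂ)) ⬝ᵥ
      ((Z.map Complex.ofReal) * Res z).mulVec (fun i => (a₀ i : ℂ)))
        / ((N : ℂ) * (Real.sqrt N : ℂ)))
    (V : ℂ → ℂ)
    (hV : ∀ z : ℂ, V z = ((fun i => (Y i : ℂ)) ⬝ᵥ
      ((Z.map Complex.ofReal) * Res z * (Zᵀ.map Complex.ofReal)).mulVec
        (fun i => (Y i : ℂ))) / ((N : ℂ) ^ 2)) :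
    ∀ t : ℝ, 0 ≤ t →
      ((htil t + δ * l t : ℝ) : ℂ) =
        -(1 / (2 * Real.pi * Complex.I)) *
          (∮ z in C(c, R),
            ((z + (δ : ℂ)) * Complex.exp (-(2 * t : ℂ) * (z + (δ : ℂ))) * L₀ z
              + 2 * Complex.exp (-(t : ℂ) * (z + (δ : ℂ))) *
                (1 - Complex.exp (-(t : ℂ) * (z + (δ : ℂ)))) * U₀ z
              + ((1 - Complex.exp (-(t : ℂ) * (z + (δ : ℂ)))) ^ 2 / (z + (δ : ℂ))) * V z)) := by
  intro t ht
  classical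
  have hNR : (N : ℝ) ≠ 0 := Nat.cast_ne_zero.mpr hN.ne'
  have hNC : (N : ℂ) ≠ 0 := Nat.cast_ne_zero.mpr hN.ne'
  have hsN : Real.sqrt N ≠ 0 := by
    have : (0:ℝ) < N := by exact_mod_cast hN
    positivity
  have hsN2 : (Real.sqrt N) ^ 2 = (N : ℝ) := Real.sq_sqrt (Nat.cast_nonneg N)
  set M : Matrix (Fin N) (Fin N) ℝ := (N : ℝ)⁻¹ • (Zᵀ * Z) with hMdef
  have hMt : Mᵀ = M := by
    rw [hMdef, transpose_smul, transpose_mul, transpose_transpose]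
  have hMherm : M.IsHermitian := by
    show Mᴴ = M
    have : Mᴴ = Mᵀ := by
      ext i j
      simp [conjTranspose_apply]
    rw [this, hMt]
  set v : Fin N → Fin N → ℝ := fun i => ⇑(hMherm.eigenvectorBasis i) with hvdef
  set lam : Fin N → ℝ := hMherm.eigenvalues with hlamdef
  have hEig : ∀ i, M.mulVec (v i) = lam i • v i := fun i =>
    hMherm.mulVec_eigenvectorBasis i
  have horth : ∀ i j, v i ⬝ᵥ v j = if i = j then 1 else 0 := by
    intro i j
    rcases hMherm.eigenvectorBasis.orthonormal with ⟨hnorm, horthog⟩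
    by_cases hij : i = j
    · subst hij
      have h2 : (inner ℝ (hMherm.eigenvectorBasis i) (hMherm.eigenvectorBasis i) : ℝ) = 1 := by
        rw [real_inner_self_eq_norm_sq, hnorm i]; norm_num
      simp only [if_pos rfl]
      rw [← h2]
      simp only [PiLp.inner_apply, RCLike.inner_apply, conj_trivial, dotProduct, hvdef, mul_comm, if_true]
    · have := horthog hij
      simp only [if_neg hij]
      rw [← this]
      simp [PiLp.inner_apply, RCLike.inner_apply, dotProduct, hvdef, mul_comm]
  have hv0 : ∀ i, v i ≠ 0 := by
    intro i h
    have := horth i i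
    rw [h] at this
    simp at this
  have hexpand : ∀ x : Fin N → ℝ, x = ∑ i, (v i ⬝ᵥ x) • v i := by
    intro x
    have h := hMherm.eigenvectorBasis.sum_repr' (WithLp.toLp 2 x)
    have h2 : ∀ i, (inner ℝ (hMherm.eigenvectorBasis i) (WithLp.toLp 2 x) : ℝ)
        = v i ⬝ᵥ x := by
      intro i; simp [PiLp.inner_apply, RCLike.inner_apply, dotProduct, hvdef, mul_comm]
    funext j
    show (WithLp.toLp 2 x).ofLp j = _
    conv_lhs => rw [← h]
    simp only [h2]
    simp [hvdef, Finset.sum_apply]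
  -- spectrum facts
  have hmemball : ∀ i, ((lam i : ℝ) : ℂ) ∈ ball c R := fun i =>
    hspec (stmt17_eig_mem_spectrum M (v i) (lam i) (hEig i) (hv0 i))
  have hμ : ∀ i, lam i + δ ≠ 0 := by
    intro i h
    have hlameq : lam i = -δ := by linarith
    have := hmemball i
    rw [hlameq] at this
    exact hδΓ (ball_subset_closedBall this)
  have hμC : ∀ i, ((lam i : ℝ) : ℂ) + (δ : ℂ) ≠ 0 := by
    intro i h
    apply hμ i
    have : (((lam i + δ : ℝ)) : ℂ) = 0 := by push_cast; linear_combination h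
    exact_mod_cast this
  -- coefficients
  set α : Fin N → ℝ := fun i => v i ⬝ᵥ a₀ with hαdef
  set βR : Fin N → ℝ := fun i => Y ⬝ᵥ Z.mulVec (v i) with hβdef
  set κ : Fin N → ℝ → ℝ := fun i s => v i ⬝ᵥ a s with hκdef
  have hβalt : ∀ i, v i ⬝ᵥ Zᵀ.mulVec Y = βR i := by
    intro i
    rw [dotProduct_mulVec, vecMul_transpose, dotProduct_comm]
  -- ODE in coordinates
  have hκode : ∀ i s, HasDerivAt (κ i)
      (-((lam i + δ) * κ i s) + (Real.sqrt N)⁻¹ * βR i) s := by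
    intro i s
    set F : Fin N → ℝ := -((M + δ • (1 : Matrix (Fin N) (Fin N) ℝ)).mulVec (a s))
        + (Real.sqrt N)⁻¹ • Zᵀ.mulVec Y with hF
    have h2 : ∀ j, HasDerivAt (fun u => a u j) (F j) s := fun j =>
      hasDerivAt_pi.mp (hODE s) j
    have h3 : HasDerivAt (fun u => ∑ j, v i j * a u j) (∑ j, v i j * F j) s :=
      HasDerivAt.fun_sum fun j _ => (h2 j).const_mul (v i j)
    have hval : ∑ j, v i j * F j = -((lam i + δ) * κ i s) + (Real.sqrt N)⁻¹ * βR i := by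
      have hdot : ∑ j, v i j * F j = v i ⬝ᵥ F := rfl
      rw [hdot, hF]
      rw [dotProduct_add, dotProduct_neg]
      rw [add_mulVec]
      rw [show (δ • (1 : Matrix (Fin N) (Fin N) ℝ)).mulVec (a s) = δ • a s from by
        rw [smul_mulVec, one_mulVec]]
      rw [dotProduct_add, dotProduct_smul]
      have hMa : v i ⬝ᵥ M.mulVec (a s) = lam i * κ i s := by
        rw [dotProduct_mulVec, ← hMt, vecMul_transpose, hEig i, smul_dotProduct]
        rfl
      rw [hMa, dotProduct_smul, hβalt i]
      simp only [smul_eq_mul, hκdef]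
      ring
    rw [← hval]
    have : κ i = fun u => ∑ j, v i j * a u j := by
      funext u; rfl
    rw [this]
    exact h3
  have hκ0 : ∀ i, κ i 0 = α i := by
    intro i; simp only [hκdef, ha0, hαdef]
  have hκsol : ∀ i s, κ i s = Real.exp (-((lam i + δ) * s)) *
      (α i - ((Real.sqrt N)⁻¹ * βR i) / (lam i + δ)) +
      ((Real.sqrt N)⁻¹ * βR i) / (lam i + δ) := fun i =>
    stmt17_ode_solve (lam i + δ) ((Real.sqrt N)⁻¹ * βR i) (α i) (hμ i) (κ i) (hκ0 i)
      (fun s => hκode i s)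
  -- LHS as a sum
  have hquad : ∀ x : Fin N → ℝ,
      x ⬝ᵥ M.mulVec x + δ * (x ⬝ᵥ x) = ∑ i, (lam i + δ) * (v i ⬝ᵥ x) ^ 2 := by
    intro x
    have hx := hexpand x
    have h1 : x ⬝ᵥ M.mulVec x = ∑ i, lam i * (v i ⬝ᵥ x) ^ 2 := by
      conv_lhs => rw [hx]
      rw [stmt17_mulVec_sum]
      have : ∀ i, M.mulVec ((v i ⬝ᵥ x) • v i) = ((v i ⬝ᵥ x) * lam i) • v i := by
        intro i
        rw [mulVec_smul, hEig i, smul_smul]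
      simp only [this]
      rw [stmt17_dot_sums v horth]
      refine Finset.sum_congr rfl fun i _ => by ring
    have h2 : x ⬝ᵥ x = ∑ i, (v i ⬝ᵥ x) ^ 2 := by
      conv_lhs => rw [hx]
      rw [stmt17_dot_sums v horth]
      refine Finset.sum_congr rfl fun i _ => by ring
    rw [h1, h2, Finset.mul_sum, ← Finset.sum_add_distrib]
    refine Finset.sum_congr rfl fun i _ => by ring
  have hLHS : htil t + δ * l t = (∑ i, (lam i + δ) * (κ i t) ^ 2) / N := by
    rw [hhtil t, hl t]
    have hZZ : a t ⬝ᵥ (Zᵀ * Z).mulVec (a t) = Z.mulVec (a t) ⬝ᵥ Z.mulVec (a t) := by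
      rw [← mulVec_mulVec, dotProduct_mulVec, vecMul_transpose]
    have hMq : a t ⬝ᵥ M.mulVec (a t) = (N : ℝ)⁻¹ * (a t ⬝ᵥ (Zᵀ * Z).mulVec (a t)) := by
      rw [hMdef, smul_mulVec, dotProduct_smul, smul_eq_mul]
    have hq := hquad (a t)
    rw [hMq] at hq
    have hvk : ∀ i, v i ⬝ᵥ a t = κ i t := fun i => rfl
    simp only [hvk] at hq
    rw [← hZZ]
    rw [show (a t ⬝ᵥ (Zᵀ * Z).mulVec (a t)) / (N:ℝ)^2 + δ * (a t ⬝ᵥ a t / N)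
        = ((N:ℝ)⁻¹ * (a t ⬝ᵥ (Zᵀ * Z).mulVec (a t)) + δ * (a t ⬝ᵥ a t)) / N from by
      field_simp]
    rw [hq]
  -- ==================== RHS ====================
  set lamC : Fin N → ℂ := fun i => ((lam i : ℝ) : ℂ) with hlamC
  set vc : Fin N → Fin N → ℂ := fun i j => ((v i j : ℝ) : ℂ) with hvcdef
  have horthC : ∀ i j, vc i ⬝ᵥ vc j = if i = j then 1 else 0 := by
    intro i j
    have hcast : vc i ⬝ᵥ vc j = ((v i ⬝ᵥ v j : ℝ) : ℂ) := by
      simp only [dotProduct, hvcdef]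
      push_cast
      rfl
    rw [hcast, horth i j]
    split_ifs <;> norm_num
  set eC : ℂ → ℂ := fun z => Complex.exp (-(t : ℂ) * (z + (δ : ℂ))) with heCdef
  set G : Fin N → ℂ → ℂ := fun i z =>
    (z + (δ : ℂ)) * Complex.exp (-(2 * (t : ℂ)) * (z + (δ : ℂ))) * ((α i : ℂ) ^ 2 / (N : ℂ))
    + 2 * eC z * (1 - eC z) * ((α i : ℂ) * (βR i : ℂ) / ((N : ℂ) * (Real.sqrt N : ℂ)))
    + (1 - eC z) ^ 2 / (z + (δ : ℂ)) * ((βR i : ℂ) ^ 2 / (N : ℂ) ^ 2) with hGdef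
  have hδcball : ∀ z ∈ closedBall c R, z + (δ : ℂ) ≠ 0 := by
    intro z hz h
    have hzeq : z = ((-δ : ℝ) : ℂ) := by push_cast; linear_combination h
    exact hδΓ (hzeq ▸ hz)
  have hδsphere : ∀ z ∈ sphere c R, z + (δ : ℂ) ≠ 0 := fun z hz =>
    hδcball z (sphere_subset_closedBall hz)
  have hlamsphere : ∀ z ∈ sphere c R, ∀ i, lamC i ≠ z := by
    intro z hz i h
    have h1 := mem_ball.mp (hmemball i)
    have h2 := mem_sphere.mp hz
    rw [show ((lam i : ℝ) : ℂ) = lamC i from rfl, h] at h1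
    linarith [h1, h2.ge, h2.le]
  have hznotspec : ∀ z ∈ sphere c R, z ∉ spectrum ℂ (M.map Complex.ofReal) := by
    intro z hz hmem
    have h1 := mem_ball.mp (hspec hmem)
    have h2 := mem_sphere.mp hz
    linarith [h1, h2.ge]
  -- eigen decomposition of resolvent
  have hResv : ∀ z ∈ sphere c R, ∀ i, (Res z).mulVec (vc i) = (lamC i - z)⁻¹ • vc i := by
    intro z hz i
    rw [hRes z]
    exact stmt17_res_mulVec M (v i) (lam i) z (hEig i) (hv0 i) (hznotspec z hz)
  have ha₀c : (fun j => ((a₀ j : ℝ) : ℂ)) = ∑ i, (α i : ℂ) • vc i := by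
    funext j
    rw [congrFun (hexpand a₀) j, Finset.sum_apply, Finset.sum_apply]
    simp only [Pi.smul_apply, smul_eq_mul]
    push_cast
    rfl
  have hZY : (fun j => (((Zᵀ.mulVec Y) j : ℝ) : ℂ)) = ∑ i, (βR i : ℂ) • vc i := by
    funext j
    rw [congrFun (hexpand (Zᵀ.mulVec Y)) j, Finset.sum_apply, Finset.sum_apply]
    simp only [Pi.smul_apply, smul_eq_mul, hβalt]
    push_cast
    rfl
  have hResa₀ : ∀ z ∈ sphere c R, (Res z).mulVec (fun j => ((a₀ j : ℝ) : ℂ))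
      = ∑ i, ((α i : ℂ) * (lamC i - z)⁻¹) • vc i := by
    intro z hz
    rw [ha₀c, stmt17_mulVec_sum]
    refine Finset.sum_congr rfl fun i _ => ?_
    rw [mulVec_smul, hResv z hz i, smul_smul]
  have hResZY : ∀ z ∈ sphere c R, (Res z).mulVec (∑ i, (βR i : ℂ) • vc i)
      = ∑ i, ((βR i : ℂ) * (lamC i - z)⁻¹) • vc i := by
    intro z hz
    rw [stmt17_mulVec_sum]
    refine Finset.sum_congr rfl fun i _ => ?_
    rw [mulVec_smul, hResv z hz i, smul_smul]
  have hYZv : ∀ i, (fun j => ((Y j : ℝ) : ℂ)) ⬝ᵥ (Z.map Complex.ofReal).mulVec (vc i)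
      = ((βR i : ℝ) : ℂ) := by
    intro i
    rw [show vc i = (fun j => ((v i j : ℝ) : ℂ)) from rfl, stmt17_map_mulVec_ofReal Z (v i)]
    simp only [dotProduct, hβdef]
    push_cast
    rfl
  -- the three spectral functions on the sphere
  have hL₀z : ∀ z ∈ sphere c R, L₀ z = (∑ i, (α i : ℂ) ^ 2 * (lamC i - z)⁻¹) / (N : ℂ) := by
    intro z hz
    rw [hL₀ z, hResa₀ z hz, ha₀c, stmt17_dot_sums vc horthC]
    congr 1
    refine Finset.sum_congr rfl fun i _ => by ring
  have hU₀z : ∀ z ∈ sphere c R, U₀ z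
      = (∑ i, (α i : ℂ) * (βR i : ℂ) * (lamC i - z)⁻¹) / ((N : ℂ) * (Real.sqrt N : ℂ)) := by
    intro z hz
    rw [hU₀ z, ← mulVec_mulVec, hResa₀ z hz, stmt17_mulVec_sum, stmt17_dotProduct_sum]
    congr 1
    refine Finset.sum_congr rfl fun i _ => ?_
    rw [mulVec_smul, dotProduct_smul, smul_eq_mul, hYZv i]
    ring
  have hVz : ∀ z ∈ sphere c R, V z
      = (∑ i, (βR i : ℂ) ^ 2 * (lamC i - z)⁻¹) / (N : ℂ) ^ 2 := by
    intro z hz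
    rw [hV z]
    have h1 : ((Zᵀ).map Complex.ofReal).mulVec (fun j => ((Y j : ℝ) : ℂ))
        = ∑ i, (βR i : ℂ) • vc i := by
      rw [stmt17_map_mulVec_ofReal (Zᵀ) Y]
      exact hZY
    rw [← mulVec_mulVec, ← mulVec_mulVec, h1, hResZY z hz, stmt17_mulVec_sum,
      stmt17_dotProduct_sum]
    congr 1
    refine Finset.sum_congr rfl fun i _ => ?_
    rw [mulVec_smul, dotProduct_smul, smul_eq_mul, hYZv i]
    ring
  -- equality of integrands on the sphere
  have hEqOn : Set.EqOn (fun z : ℂ =>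
        ((z + (δ : ℂ)) * Complex.exp (-(2 * t : ℂ) * (z + (δ : ℂ))) * L₀ z
          + 2 * Complex.exp (-(t : ℂ) * (z + (δ : ℂ))) *
            (1 - Complex.exp (-(t : ℂ) * (z + (δ : ℂ)))) * U₀ z
          + ((1 - Complex.exp (-(t : ℂ) * (z + (δ : ℂ)))) ^ 2 / (z + (δ : ℂ))) * V z))
      (fun z => ∑ i, (lamC i - z)⁻¹ * G i z) (sphere c R) := by
    intro z hz
    simp only
    rw [hL₀z z hz, hU₀z z hz, hVz z hz]
    rw [Finset.sum_div, Finset.sum_div, Finset.sum_div, Finset.mul_sum, Finset.mul_sum,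
      Finset.mul_sum, ← Finset.sum_add_distrib, ← Finset.sum_add_distrib]
    refine Finset.sum_congr rfl fun i _ => ?_
    simp only [hGdef, heCdef]
    ring
  -- integrability
  have hcont : ∀ i, ContinuousOn (fun z => (lamC i - z)⁻¹ * G i z) (sphere c R) := by
    intro i
    apply ContinuousOn.mul
    · exact ContinuousOn.inv₀ ((continuous_const.sub continuous_id).continuousOn)
        (fun z hz => sub_ne_zero.mpr (hlamsphere z hz i))
    · simp only [hGdef, heCdef]
      apply ContinuousOn.add
      apply ContinuousOn.add
      · exact (((continuous_id.add continuous_const).mul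
          ((continuous_const.mul (continuous_id.add continuous_const)).cexp)).mul
          continuous_const).continuousOn
      · exact (((continuous_const.mul
          ((continuous_const.mul (continuous_id.add continuous_const)).cexp)).mul
          (continuous_const.sub
            ((continuous_const.mul (continuous_id.add continuous_const)).cexp))).mul
          continuous_const).continuousOn
      · apply ContinuousOn.mul
        · apply ContinuousOn.div
          · exact ((continuous_const.sub
              ((continuous_const.mul (continuous_id.add continuous_const)).cexp)).pow
              2).continuousOn
          · exact (continuous_id.add continuous_const).continuousOn
          · exact fun z hz => hδsphere z hz
        · exact continuousOn_const
  -- holomorphy of G i on the closed ball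
  have hGdiff : ∀ i, DiffContOnCl ℂ (G i) (ball c R) := by
    intro i
    apply DifferentiableOn.diffContOnCl
    rw [closure_ball c hR.ne']
    simp only [hGdef, heCdef]
    apply DifferentiableOn.add
    apply DifferentiableOn.add
    · exact (((differentiable_id.add_const _).mul
        (((differentiable_const _).mul (differentiable_id.add_const _)).cexp)).mul_const
        _).differentiableOn
    · exact (((differentiable_const _).mul
        (((differentiable_const _).mul (differentiable_id.add_const _)).cexp) |>.mul
        ((differentiable_const _).sub
          (((differentiable_const _).mul (differentiable_id.add_const _)).cexp))).mul_const
        _).differentiableOn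
    · apply DifferentiableOn.mul
      · apply DifferentiableOn.div
        · exact (((differentiable_const _).sub
            (((differentiable_const _).mul (differentiable_id.add_const _)).cexp)).pow
            2).differentiableOn
        · exact (differentiable_id.add_const _).differentiableOn
        · exact fun z hz => hδcball z hz
      · exact differentiableOn_const _
  -- compute the contour integral
  have hIntEq : (∮ z in C(c, R),
        ((z + (δ : ℂ)) * Complex.exp (-(2 * t : ℂ) * (z + (δ : ℂ))) * L₀ z
          + 2 * Complex.exp (-(t : ℂ) * (z + (δ : ℂ))) *
            (1 - Complex.exp (-(t : ℂ) * (z + (δ : ℂ)))) * U₀ z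
          + ((1 - Complex.exp (-(t : ℂ) * (z + (δ : ℂ)))) ^ 2 / (z + (δ : ℂ))) * V z))
      = ∑ i, -(2 * Real.pi * Complex.I) * G i (lamC i) := by
    rw [circleIntegral.integral_congr hR.le hEqOn]
    rw [stmt17_circleIntegral_finset_sum Finset.univ _ c R
      (fun i _ => ((hcont i).circleIntegrable hR.le))]
    refine Finset.sum_congr rfl fun i _ => ?_
    exact stmt17_cauchy_formula (G i) c (lamC i) R hR.le (hGdiff i) (hmemball i)
  rw [hIntEq, Finset.mul_sum]
  have h2πI : (2 * (Real.pi : ℂ) * Complex.I) ≠ 0 := by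
    simp [Real.pi_ne_zero, Complex.I_ne_zero]
  have hsimp : ∀ i, -(1 / (2 * (Real.pi : ℂ) * Complex.I)) *
      (-(2 * (Real.pi : ℂ) * Complex.I) * G i (lamC i)) = G i (lamC i) := by
    intro i
    field_simp
  simp only [hsimp]
  -- final per-eigenvalue identity
  rw [hLHS, Finset.sum_div]
  push_cast
  refine Finset.sum_congr rfl fun i _ => ?_
  have hκt := hκsol i t
  set er := Real.exp (-((lam i + δ) * t)) with herdef
  have heCl : eC (lamC i) = (er : ℂ) := by
    rw [heCdef]
    simp only
    rw [herdef, Complex.ofReal_exp]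
    congr 1
    rw [hlamC]
    push_cast
    ring
  have hE2 : Complex.exp (-(2 * (t : ℂ)) * (lamC i + (δ : ℂ))) = (er : ℂ) ^ 2 := by
    have harg : -(2 * (t : ℂ)) * (lamC i + (δ : ℂ))
        = ((-((lam i + δ) * t) : ℝ) : ℂ) + ((-((lam i + δ) * t) : ℝ) : ℂ) := by
      rw [hlamC]; push_cast; ring
    rw [harg, Complex.exp_add, ← Complex.ofReal_exp, ← herdef]
    ring
  simp only [hGdef]
  rw [heCl, hE2, hκt]
  have hμCi := hμC i
  have hsNC : ((Real.sqrt N : ℝ) : ℂ) ≠ 0 := by exact_mod_cast hsN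
  have hNC2 : (N : ℂ) = ((Real.sqrt N : ℝ) : ℂ) ^ 2 := by
    rw [show ((Real.sqrt N : ℝ) : ℂ) ^ 2 = (((Real.sqrt N) ^ 2 : ℝ) : ℂ) from by push_cast; ring,
      hsN2]
    norm_cast
  simp only [hlamC]
  push_cast
  rw [hNC2]
  have hμR : ((lam i : ℝ) : ℂ) + (δ : ℂ) ≠ 0 := hμCi
  field_simp [hμR, hsNC]
  ring
end
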